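/- arXiv:2407.19743 — 2 statements merged into one kernel-verified Lean document; each statement's English description precedes it below -/
import Mathlib

section
/- Let 0 < α < 1 and let a, b : ℝ → ℝ be 2π-periodic with a ∈ C^{2,α}(𝕋) and b ∈ C^{1,α}(𝕋). Then for every x ∈ ℝ, the commutator admits the integration-by-parts representation H[a·b'](x) − a(x)·H[b'](x) = (1/2π) p.v. ∫_{−π}^{π} [ a'(y)/tan((x−y)/2) + (a(y)−a(x))/(2 sin²((x−y)/2)) ] (b(x)−b(y)) dy. -/
open Real Filter MeasureTheory Set

/-- Principal value as the limit as `δ → 0⁺`. -/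
noncomputable def pvLim (g : ℝ → ℝ) : ℝ :=
  limUnder (nhdsWithin (0 : ℝ) (Set.Ioi 0)) g

/-- Periodic Hilbert transform `H[f](x) = (1/2π) p.v. ∫_{x-π}^{x+π} f(y)/tan((x-y)/2) dy`. -/
noncomputable def Hil (f : ℝ → ℝ) (x : ℝ) : ℝ :=
  (1 / (2 * π)) * pvLim (fun δ =>
    ∫ y in {y : ℝ | y ∈ Set.Icc (x - π) (x + π) ∧ δ ≤ |x - y|},
      f y / Real.tan ((x - y) / 2))

/-- Commutator `⟦H,a⟧[g] = H[a·g] − a·H[g]`. -/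
noncomputable def commH (a g : ℝ → ℝ) (x : ℝ) : ℝ :=
  Hil (fun y => a y * g y) x - a x * Hil g x

/-- Sup norm `‖f‖_{C⁰}` on the torus (realized as a sup over ℝ). -/
noncomputable def nC0 (f : ℝ → ℝ) : ℝ := ⨆ x : ℝ, |f x|

/-- `‖f‖_{C^k} = Σ_{ℓ=0}^k ‖f^{(ℓ)}‖_{C⁰}`. -/
noncomputable def nCk (k : ℕ) (f : ℝ → ℝ) : ℝ :=
  ∑ l ∈ Finset.range (k + 1), nC0 (deriv^[l] f)

/-- The Hölder seminorm `sup_{x₁ ≠ x₂} |f(x₁) − f(x₂)|/|x₁ − x₂|^α`. -/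
noncomputable def holderSemi (α : ℝ) (f : ℝ → ℝ) : ℝ :=
  ⨆ p : ℝ × ℝ, if p.1 = p.2 then 0 else |f p.1 - f p.2| / |p.1 - p.2| ^ α

/-- `‖f‖_{C^α} = ‖f‖_{C⁰} + Hölder seminorm`. -/
noncomputable def nCa (α : ℝ) (f : ℝ → ℝ) : ℝ := nC0 f + holderSemi α f

/-- `‖f‖_{C^{k,α}} = ‖f‖_{C^{k-1}} + ‖f^{(k)}‖_{C^α}`. -/
noncomputable def nCka (k : ℕ) (α : ℝ) (f : ℝ → ℝ) : ℝ :=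
  nCk (k - 1) f + nCa α (deriv^[k] f)

/-- Membership in the Hölder space `C^{k,α}(𝕋)` (finiteness of the norm):
`f` is `k` times continuously differentiable and `f^{(k)}` is `α`-Hölder. -/
def MemCka (k : ℕ) (α : ℝ) (f : ℝ → ℝ) : Prop :=
  ContDiff ℝ (k : ℕ∞) f ∧
    ∃ K : ℝ, ∀ x y : ℝ, |deriv^[k] f x - deriv^[k] f y| ≤ K * |x - y| ^ α

/-- The traveling-wave operator `F[c,φ]`. -/
noncomputable def Fop (ε α₀ β c : ℝ) (φ : ℝ → ℝ) (ξ : ℝ) : ℝ :=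
  2 * c * deriv φ ξ + (c * α₀ + (α₀ - β) / ε) * Hil (deriv (deriv φ)) ξ
    + (1 / ε) * (deriv φ ξ + Hil φ ξ)
    + Hil (fun y => (Hil (deriv φ) y) ^ 2) ξ
    - commH φ (Hil (deriv φ)) ξ
    - (α₀ - β) * commH φ (Hil (deriv (deriv (deriv φ)))) ξ

/-- The linearized operator at the trivial solution. -/
noncomputable def Lop (ε α₀ β c : ℝ) (h : ℝ → ℝ) (ξ : ℝ) : ℝ :=
  2 * c * deriv h ξ + (c * α₀ + (α₀ - β) / ε) * Hil (deriv (deriv h)) ξ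
    + (1 / ε) * (deriv h ξ + Hil h ξ)

/-- The Gateaux derivative of `F` in `φ`. -/
noncomputable def DFop (ε α₀ β c : ℝ) (φ h : ℝ → ℝ) (ξ : ℝ) : ℝ :=
  2 * c * deriv h ξ + (c * α₀ + (α₀ - β) / ε) * Hil (deriv (deriv h)) ξ
    + (1 / ε) * (deriv h ξ + Hil h ξ)
    + 2 * Hil (fun y => Hil (deriv φ) y * Hil (deriv h) y) ξ
    - commH h (Hil (deriv φ)) ξ
    - commH φ (Hil (deriv h)) ξ
    - (α₀ - β) * commH h (Hil (deriv (deriv (deriv φ)))) ξ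
    - (α₀ - β) * commH φ (Hil (deriv (deriv (deriv h)))) ξ


/-!
Write `k(y) = cot ((x - y) / 2)`. Since `k` is odd about `x`, the truncated integrals of `f k`
equal those of `(f - f x) k`, which converge by dominated convergence once `(f - f x) k` is
integrable: for `f = b'` because `b'` is `α`-Hölder, so the integrand is `O(|x - y| ^ (α - 1))`,
and for `f = a b'` because moreover `a` is Lipschitz.
On a truncated domain, `(a - a x) b' k` is the derivative of `F = (a - a x) (b - b x) k` plus the
integrand on the right, so the two sides differ by `F (x - δ) - F (x + δ)`: `F` vanishes at
`x ± π`, where `k = 0`, and `|F z| ≤ C |b z - b x| → 0` as `z → x`.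
-/

open Topology

namespace CommutatorIBP

lemma div_tan_eq_mul_cot (f u : ℝ) : f / tan u = f * cot u := by
  rw [tan_eq_sin_div_cos, cot_eq_cos_div_sin]
  rcases eq_or_ne (cos u) 0 with hc | hc
  · simp [hc]
  rcases eq_or_ne (sin u) 0 with hs | hs
  · simp [hs]
  field_simp

lemma measurable_cot : Measurable cot := by
  rw [show cot = fun u => cos u / sin u from funext cot_eq_cos_div_sin]
  fun_prop

/-- By Jordan's inequality; at `u = 0` both sides are `0` (`cot 0 = 1 / 0 = 0`). -/
lemma abs_cot_le {u : ℝ} (hu : |u| ≤ π / 2) : |cot u| ≤ π / (2 * |u|) := by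
  rcases eq_or_ne u 0 with rfl | hu0
  · simp [cot_eq_cos_div_sin]
  have hpos : 0 < 2 / π * |u| := by positivity
  have hsin : 2 / π * |u| ≤ |sin u| :=
    abs_sin_eq_sin_abs_of_abs_le_pi (by linarith [pi_pos]) ▸ mul_le_sin (abs_nonneg u) hu
  calc |cot u| = |cos u| / |sin u| := by rw [cot_eq_cos_div_sin, abs_div]
    _ ≤ 1 / (2 / π * |u|) := div_le_div₀ zero_le_one (abs_cos_le_one u) hpos hsin
    _ = π / (2 * |u|) := by field_simp

lemma abs_cot_half_sub_le {x y : ℝ} (h : |x - y| ≤ π) :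
    |cot ((x - y) / 2)| ≤ π / |x - y| := by
  have := abs_cot_le (u := (x - y) / 2) (by rw [abs_div, abs_two]; linarith)
  rwa [abs_div, abs_two, mul_div_cancel₀ _ two_ne_zero] at this

lemma sin_half_sub_ne_zero {x y : ℝ} (hxy : x ≠ y) (h : |x - y| ≤ π) :
    sin ((x - y) / 2) ≠ 0 := by
  obtain ⟨h₁, h₂⟩ := abs_le.1 h
  intro hs
  have := (sin_eq_zero_iff_of_lt_of_lt (by linarith [pi_pos]) (by linarith [pi_pos])).1 hs
  exact hxy (by linarith)

lemma continuousOn_cot_half_sub {x : ℝ} {s : Set ℝ}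
    (hs : ∀ y ∈ s, sin ((x - y) / 2) ≠ 0) :
    ContinuousOn (fun y => cot ((x - y) / 2)) s := by
  simp only [cot_eq_cos_div_sin]
  exact ContinuousOn.div (by fun_prop) (by fun_prop) hs

lemma abs_sub_mul_cot_half_sub_le {f : ℝ → ℝ} {x y K α : ℝ} (hxy : |x - y| ≤ π)
    (hK : |f y - f x| ≤ K * |x - y| ^ α) :
    |(f y - f x) * cot ((x - y) / 2)| ≤ |K| * π * |x - y| ^ (α - 1) := by
  rcases eq_or_ne x y with rfl | hne
  · simp only [sub_self, zero_mul, abs_zero]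
    positivity
  have hpos : 0 < |x - y| := abs_pos.2 (sub_ne_zero.2 hne)
  calc |(f y - f x) * cot ((x - y) / 2)| = |f y - f x| * |cot ((x - y) / 2)| := abs_mul _ _
    _ ≤ (|K| * |x - y| ^ α) * (π / |x - y|) := by
        gcongr
        · exact hK.trans (by gcongr; exact le_abs_self K)
        · exact abs_cot_half_sub_le hxy
    _ = |K| * π * |x - y| ^ (α - 1) := by rw [rpow_sub_one hpos.ne']; field_simp

lemma intervalIntegrable_abs_rpow {r : ℝ} (hr : -1 < r) {c : ℝ} (hc : 0 ≤ c) :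
    IntervalIntegrable (fun t => |t| ^ r) volume (-c) c := by
  have hpos : IntervalIntegrable (fun t => |t| ^ r) volume 0 c :=
    (intervalIntegral.intervalIntegrable_rpow' hr).congr_uIoo fun t ht => by
      rw [uIoo_of_le hc] at ht
      simp [abs_of_pos ht.1]
  have hneg : IntervalIntegrable (fun t => |t| ^ r) volume (-c) 0 := by
    simpa using (hpos.comp_sub_left 0).symm
  exact hneg.trans hpos

lemma integrableOn_abs_sub_rpow {r : ℝ} (hr : -1 < r) (x : ℝ) :
    IntegrableOn (fun y => |x - y| ^ r) (Icc (x - π) (x + π)) := by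
  have h := ((intervalIntegrable_abs_rpow hr pi_pos.le).comp_sub_left x).symm
  rw [sub_neg_eq_add, intervalIntegrable_iff_integrableOn_Icc_of_le (by linarith [pi_pos])] at h
  exact h

/-- Reducible, so that `rw` recognises it in the unfolded `Hil` and in the statement. -/
abbrev pvDomain (x δ : ℝ) : Set ℝ := {y | y ∈ Icc (x - π) (x + π) ∧ δ ≤ |x - y|}

lemma measurableSet_le_abs_sub (x δ : ℝ) : MeasurableSet {y : ℝ | δ ≤ |x - y|} :=
  measurableSet_le measurable_const (by fun_prop)

lemma isCompact_pvDomain (x δ : ℝ) : IsCompact (pvDomain x δ) :=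
  isCompact_Icc.inter_right <|
    isClosed_le continuous_const (continuous_const.sub continuous_id).abs

lemma sin_half_sub_ne_zero_of_mem_pvDomain {x δ y : ℝ} (hδ : 0 < δ)
    (hy : y ∈ pvDomain x δ) :
    sin ((x - y) / 2) ≠ 0 := by
  obtain ⟨⟨h₁, h₂⟩, h₃⟩ := hy
  refine sin_half_sub_ne_zero (fun h => ?_) (abs_le.2 ⟨by linarith, by linarith⟩)
  rw [h, sub_self, abs_zero] at h₃
  linarith

lemma pvDomain_eq_union {x δ : ℝ} (hδ : 0 < δ) (hδπ : δ ≤ π) :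
    pvDomain x δ = Icc (x - π) (x - δ) ∪ Icc (x + δ) (x + π) := by
  ext y
  simp only [mem_ofPred_eq, mem_Icc, mem_union, le_abs]
  constructor
  · rintro ⟨⟨h₁, h₂⟩, h₃ | h₃⟩
    · exact Or.inl ⟨h₁, by linarith⟩
    · exact Or.inr ⟨by linarith, h₂⟩
  · rintro (⟨h₁, h₂⟩ | ⟨h₁, h₂⟩)
    · exact ⟨⟨h₁, by linarith⟩, Or.inl (by linarith)⟩
    · exact ⟨⟨by linarith, h₂⟩, Or.inr (by linarith)⟩

lemma setIntegral_pvDomain_cot_half_sub (x δ : ℝ) :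
    ∫ y in pvDomain x δ, cot ((x - y) / 2) = 0 := by
  set g := (pvDomain x δ).indicator fun y => cot ((x - y) / 2)
  have hodd : ∀ y, g (2 * x - y) = -g y := by
    intro y
    have hmem : 2 * x - y ∈ pvDomain x δ ↔ y ∈ pvDomain x δ := by
      simp only [mem_ofPred_eq, mem_Icc, show x - (2 * x - y) = -(x - y) by ring, abs_neg]
      constructor <;> rintro ⟨⟨h₁, h₂⟩, h₃⟩ <;>
        exact ⟨⟨by linarith, by linarith⟩, h₃⟩
    by_cases hy : y ∈ pvDomain x δ
    · simp only [g, indicator_of_mem hy, indicator_of_mem (hmem.2 hy),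
        show (x - (2 * x - y)) / 2 = -((x - y) / 2) by ring, cot_eq_cos_div_sin, cos_neg,
        sin_neg, div_neg]
    · simp only [g, indicator_of_notMem hy, indicator_of_notMem (mt hmem.1 hy), neg_zero]
  have h := integral_sub_left_eq_self g volume (2 * x)
  simp only [hodd, integral_neg] at h
  rw [← integral_indicator (isCompact_pvDomain x δ).measurableSet]
  linarith

lemma integrableOn_sub_mul_cot_of_holder {f : ℝ → ℝ} {x K α : ℝ} (hα : 0 < α)
    (hf : ContinuousOn f (Icc (x - π) (x + π)))
    (hK : ∀ y ∈ Icc (x - π) (x + π), |f y - f x| ≤ K * |x - y| ^ α) :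
    IntegrableOn (fun y => (f y - f x) * cot ((x - y) / 2)) (Icc (x - π) (x + π)) := by
  refine Integrable.mono'
    ((integrableOn_abs_sub_rpow (r := α - 1) (by linarith) x).const_mul (|K| * π))
    (((hf.sub continuousOn_const).aestronglyMeasurable measurableSet_Icc).mul
      (measurable_cot.comp (by fun_prop)).aestronglyMeasurable) ?_
  refine (ae_restrict_mem measurableSet_Icc).mono fun y hy => ?_
  exact abs_sub_mul_cot_half_sub_le
    (abs_le.2 ⟨by linarith [hy.2], by linarith [hy.1]⟩) (hK y hy)

lemma integrableOn_sub_mul_cot_of_lipschitzOnWith {f : ℝ → ℝ} {x : ℝ} {K : NNReal}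
    (hf : LipschitzOnWith K f (Icc (x - π) (x + π))) :
    IntegrableOn (fun y => (f y - f x) * cot ((x - y) / 2)) (Icc (x - π) (x + π)) := by
  have hx : x ∈ Icc (x - π) (x + π) := ⟨by linarith [pi_pos], by linarith [pi_pos]⟩
  refine integrableOn_sub_mul_cot_of_holder (K := K) one_pos hf.continuousOn fun y hy => ?_
  simpa only [rpow_one, Real.dist_eq, abs_sub_comm x y] using hf.dist_le_mul y hy x hx

lemma integrableOn_mul_sub_mul_cot {f g : ℝ → ℝ} {x : ℝ} {K : NNReal}
    (hf : LipschitzOnWith K f (Icc (x - π) (x + π)))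
    (hgc : ContinuousOn g (Icc (x - π) (x + π)))
    (hg : IntegrableOn (fun y => (g y - g x) * cot ((x - y) / 2)) (Icc (x - π) (x + π))) :
    IntegrableOn (fun y => (f y * g y - f x * g x) * cot ((x - y) / 2))
      (Icc (x - π) (x + π)) := by
  refine (((integrableOn_sub_mul_cot_of_lipschitzOnWith hf).mul_continuousOn hgc
    isCompact_Icc).add (hg.const_mul (f x))).congr_fun
    (fun y _ => by simp only [Pi.add_apply]; ring) measurableSet_Icc

/-- Oddness of the kernel removes `f x`, after which dominated convergence applies. -/
lemma tendsto_setIntegral_pvDomain_div_tan {f : ℝ → ℝ} {x : ℝ}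
    (hf : IntegrableOn (fun y => (f y - f x) * cot ((x - y) / 2)) (Icc (x - π) (x + π))) :
    Tendsto (fun δ => ∫ y in pvDomain x δ, f y / tan ((x - y) / 2)) (𝓝[>] 0)
      (𝓝 (∫ y in Icc (x - π) (x + π), (f y - f x) * cot ((x - y) / 2))) := by
  set g := fun y => (f y - f x) * cot ((x - y) / 2)
  have htrunc : ∀ δ > 0, ∫ y in pvDomain x δ, f y / tan ((x - y) / 2) =
      ∫ y in Icc (x - π) (x + π), {y | δ ≤ |x - y|}.indicator g y := by
    intro δ hδ
    have hcot : IntegrableOn (fun y => cot ((x - y) / 2)) (pvDomain x δ) :=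
      (continuousOn_cot_half_sub fun y hy => sin_half_sub_ne_zero_of_mem_pvDomain hδ hy
        ).integrableOn_compact (isCompact_pvDomain x δ)
    have hg : IntegrableOn g (pvDomain x δ) := hf.mono_set inter_subset_left
    calc ∫ y in pvDomain x δ, f y / tan ((x - y) / 2)
        = ∫ y in pvDomain x δ, (g y + f x * cot ((x - y) / 2)) := by
          congr 1; ext y; rw [div_tan_eq_mul_cot]; ring
      _ = ∫ y in pvDomain x δ, g y := by
          rw [integral_add hg (hcot.const_mul _), integral_const_mul,
            setIntegral_pvDomain_cot_half_sub, mul_zero, add_zero]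
      _ = _ := by rw [setIntegral_indicator (measurableSet_le_abs_sub x δ)]; rfl
  refine Tendsto.congr' (eventually_nhdsWithin_of_forall fun δ hδ => (htrunc δ hδ).symm) ?_
  refine tendsto_integral_filter_of_dominated_convergence (fun y => ‖g y‖)
    (Eventually.of_forall fun δ => hf.aestronglyMeasurable.indicator
      (measurableSet_le_abs_sub x δ))
    (Eventually.of_forall fun δ => Eventually.of_forall fun y => norm_indicator_le_norm_self _ _)
    hf.norm ?_
  have hne : ∀ᵐ y ∂(volume.restrict (Icc (x - π) (x + π))), y ≠ x :=
    ae_restrict_of_ae (Measure.ae_ne volume x)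
  filter_upwards [hne] with y hy
  refine tendsto_const_nhds.congr' ?_
  filter_upwards [Ioo_mem_nhdsGT (abs_pos.2 (sub_ne_zero.2 hy.symm))] with δ hδ
  exact (indicator_of_mem (show y ∈ {y | δ ≤ |x - y|} from hδ.2.le) g).symm

variable {a b : ℝ → ℝ} {x : ℝ}

noncomputable def ibpBoundary (a b : ℝ → ℝ) (x y : ℝ) : ℝ :=
  (a y - a x) * (b y - b x) * cot ((x - y) / 2)

/-- The integrand on the right; reducible for the same reason as `pvDomain`. -/
noncomputable abbrev ibpIntegrand (a b : ℝ → ℝ) (x y : ℝ) : ℝ :=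
  (deriv a y / tan ((x - y) / 2) + (a y - a x) / (2 * sin ((x - y) / 2) ^ 2)) * (b x - b y)

lemma hasDerivAt_cot_half_sub {y : ℝ} (h : sin ((x - y) / 2) ≠ 0) :
    HasDerivAt (fun y => cot ((x - y) / 2)) (1 / (2 * sin ((x - y) / 2) ^ 2)) y := by
  simp only [cot_eq_cos_div_sin]
  have hu : HasDerivAt (fun y : ℝ => (x - y) / 2) (-1 / 2) y :=
    ((hasDerivAt_id y).const_sub x).div_const 2
  refine (hu.cos.div hu.sin h).congr_deriv ?_
  field_simp
  linear_combination sin_sq_add_cos_sq ((x - y) / 2)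

lemma hasDerivAt_ibpBoundary {y : ℝ} (ha : DifferentiableAt ℝ a y)
    (hb : DifferentiableAt ℝ b y)
    (h : sin ((x - y) / 2) ≠ 0) :
    HasDerivAt (ibpBoundary a b x)
      ((a y - a x) * deriv b y * cot ((x - y) / 2) - ibpIntegrand a b x y) y := by
  refine (((ha.hasDerivAt.sub_const (a x)).mul (hb.hasDerivAt.sub_const (b x))).mul
    (hasDerivAt_cot_half_sub h)).congr_deriv ?_
  simp only [ibpIntegrand, div_tan_eq_mul_cot, Pi.mul_apply]
  ring

lemma continuousOn_sub_mul_deriv_mul_cot {s : Set ℝ} (hs : ∀ y ∈ s, sin ((x - y) / 2) ≠ 0)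
    (ha : Continuous a) (hb : ContDiff ℝ 1 b) :
    ContinuousOn (fun y => (a y - a x) * deriv b y * cot ((x - y) / 2)) s :=
  ((ha.sub continuous_const).mul (hb.continuous_deriv le_rfl)).continuousOn.mul
    (continuousOn_cot_half_sub hs)

lemma continuousOn_ibpIntegrand {s : Set ℝ} (hs : ∀ y ∈ s, sin ((x - y) / 2) ≠ 0)
    (ha : ContDiff ℝ 1 a) (hb : Continuous b) :
    ContinuousOn (ibpIntegrand a b x) s := by
  unfold ibpIntegrand
  simp only [div_tan_eq_mul_cot]
  refine ContinuousOn.mul (ContinuousOn.add ?_ ?_) (by fun_prop)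
  · exact (ha.continuous_deriv le_rfl).continuousOn.mul (continuousOn_cot_half_sub hs)
  · exact (ha.continuous.sub continuous_const).continuousOn.div (by fun_prop)
      fun y hy => by simpa using hs y hy

lemma setIntegral_Icc_sub_mul_deriv_mul_cot (ha : ContDiff ℝ 1 a) (hb : ContDiff ℝ 1 b)
    {p q : ℝ} (hpq : p ≤ q) (hs : ∀ y ∈ Icc p q, sin ((x - y) / 2) ≠ 0) :
    ∫ y in Icc p q, (a y - a x) * deriv b y * cot ((x - y) / 2) =
      ibpBoundary a b x q - ibpBoundary a b x p + ∫ y in Icc p q, ibpIntegrand a b x y := by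
  have hL :=
    (continuousOn_sub_mul_deriv_mul_cot hs ha.continuous hb).integrableOn_Icc (μ := volume)
  have hR := (continuousOn_ibpIntegrand hs ha hb.continuous).integrableOn_Icc (μ := volume)
  have hftc := intervalIntegral.integral_eq_sub_of_hasDerivAt
    (fun y hy => hasDerivAt_ibpBoundary (ha.differentiable one_ne_zero y)
      (hb.differentiable one_ne_zero y) (hs y (uIcc_of_le hpq ▸ hy)))
    ((intervalIntegrable_iff_integrableOn_Icc_of_le hpq).2 (hL.sub hR))
  rw [intervalIntegral.integral_of_le hpq, ← integral_Icc_eq_integral_Ioc,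
    integral_sub hL hR] at hftc
  linarith

lemma ibpBoundary_sub_pi : ibpBoundary a b x (x - π) = 0 := by
  simp [ibpBoundary, cot_eq_cos_div_sin]

lemma ibpBoundary_add_pi : ibpBoundary a b x (x + π) = 0 := by
  simp [ibpBoundary, cot_eq_cos_div_sin, neg_div]

lemma setIntegral_pvDomain_sub_mul_deriv_mul_cot (ha : ContDiff ℝ 1 a) (hb : ContDiff ℝ 1 b)
    {δ : ℝ} (hδ : 0 < δ) (hδπ : δ ≤ π) :
    ∫ y in pvDomain x δ, (a y - a x) * deriv b y * cot ((x - y) / 2) =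
      ibpBoundary a b x (x - δ) - ibpBoundary a b x (x + δ) +
        ∫ y in pvDomain x δ, ibpIntegrand a b x y := by
  have hs : ∀ y ∈ pvDomain x δ, sin ((x - y) / 2) ≠ 0 :=
    fun y hy => sin_half_sub_ne_zero_of_mem_pvDomain hδ hy
  have hL := (continuousOn_sub_mul_deriv_mul_cot hs ha.continuous hb).integrableOn_compact
    (μ := volume) (isCompact_pvDomain x δ)
  have hR := (continuousOn_ibpIntegrand hs ha hb.continuous).integrableOn_compact
    (μ := volume) (isCompact_pvDomain x δ)
  rw [pvDomain_eq_union hδ hδπ] at hs hL hR ⊢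
  have hdisj : Disjoint (Icc (x - π) (x - δ)) (Icc (x + δ) (x + π)) :=
    disjoint_left.2 fun y h₁ h₂ => by linarith [h₁.2, h₂.1]
  rw [setIntegral_union hdisj measurableSet_Icc (hL.mono_set subset_union_left)
      (hL.mono_set subset_union_right),
    setIntegral_union hdisj measurableSet_Icc (hR.mono_set subset_union_left)
      (hR.mono_set subset_union_right),
    setIntegral_Icc_sub_mul_deriv_mul_cot ha hb (by linarith) fun y hy => hs y (Or.inl hy),
    setIntegral_Icc_sub_mul_deriv_mul_cot ha hb (by linarith) fun y hy => hs y (Or.inr hy),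
    ibpBoundary_sub_pi, ibpBoundary_add_pi]
  ring

lemma setIntegral_pvDomain_commutator (ha : ContDiff ℝ 1 a) (hb : ContDiff ℝ 1 b)
    {δ : ℝ} (hδ : 0 < δ) (hδπ : δ ≤ π) :
    (∫ y in pvDomain x δ, a y * deriv b y / tan ((x - y) / 2)) -
        a x * ∫ y in pvDomain x δ, deriv b y / tan ((x - y) / 2) =
      ibpBoundary a b x (x - δ) - ibpBoundary a b x (x + δ) +
        ∫ y in pvDomain x δ, ibpIntegrand a b x y := by
  have hcot := continuousOn_cot_half_sub (x := x) fun y hy =>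
    sin_half_sub_ne_zero_of_mem_pvDomain hδ hy
  have hb' := (hb.continuous_deriv le_rfl).continuousOn (s := pvDomain x δ)
  have hI₁ : IntegrableOn (fun y => a y * deriv b y * cot ((x - y) / 2)) (pvDomain x δ) :=
    ((ha.continuous.continuousOn.mul hb').mul hcot).integrableOn_compact (isCompact_pvDomain x δ)
  have hI₂ : IntegrableOn (fun y => deriv b y * cot ((x - y) / 2)) (pvDomain x δ) :=
    (hb'.mul hcot).integrableOn_compact (isCompact_pvDomain x δ)
  simp only [div_tan_eq_mul_cot]
  rw [← setIntegral_pvDomain_sub_mul_deriv_mul_cot ha hb hδ hδπ, ← integral_const_mul,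
    ← integral_sub hI₁ (hI₂.const_mul _)]
  congr 1 with y
  ring

lemma tendsto_ibpBoundary {K : NNReal} (ha : LipschitzOnWith K a (Icc (x - π) (x + π)))
    (hb : ContinuousAt b x) : Tendsto (ibpBoundary a b x) (𝓝 x) (𝓝 0) := by
  have hx : x ∈ Icc (x - π) (x + π) := ⟨by linarith [pi_pos], by linarith [pi_pos]⟩
  have hlim : Tendsto (fun z => K * π * |b z - b x|) (𝓝 x) (𝓝 0) := by
    simpa using ((hb.sub (continuousAt_const : ContinuousAt (fun _ => b x) x)).abs.const_mul
      (K * π)).tendsto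
  have hnhds : Icc (x - π) (x + π) ∈ 𝓝 x :=
    Icc_mem_nhds (by linarith [pi_pos]) (by linarith [pi_pos])
  refine squeeze_zero_norm' ?_ hlim
  filter_upwards [hnhds] with z hz
  have hKz : |a z - a x| ≤ K * |x - z| ^ (1 : ℝ) := by
    simpa only [rpow_one, Real.dist_eq, abs_sub_comm x z] using ha.dist_le_mul z hz x hx
  have hbound :=
    abs_sub_mul_cot_half_sub_le (abs_le.2 ⟨by linarith [hz.2], by linarith [hz.1]⟩) hKz
  rw [sub_self, rpow_zero, mul_one, NNReal.abs_eq] at hbound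
  calc ‖ibpBoundary a b x z‖ = |(a z - a x) * cot ((x - z) / 2)| * |b z - b x| := by
        rw [Real.norm_eq_abs, ibpBoundary, ← abs_mul]; ring_nf
    _ ≤ K * π * |b z - b x| := by gcongr

lemma tendsto_ibpBoundary_sub_ibpBoundary {K : NNReal}
    (ha : LipschitzOnWith K a (Icc (x - π) (x + π))) (hb : ContinuousAt b x) :
    Tendsto (fun δ => ibpBoundary a b x (x - δ) - ibpBoundary a b x (x + δ))
      (𝓝[>] 0) (𝓝 0) := by
  have h := tendsto_ibpBoundary ha hb
  have hl := (continuous_sub_left x).tendsto' 0 x (sub_zero x)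
  have hr := (continuous_const_add x).tendsto' 0 x (add_zero x)
  simpa using ((h.comp hl).sub (h.comp hr)).mono_left nhdsWithin_le_nhds

end CommutatorIBP

open CommutatorIBP in
theorem commutator_ibp_representation_general (α : ℝ) (hα0 : 0 < α)
    (a b : ℝ → ℝ)
    (haC : MemCka 2 α a) (hbC : MemCka 1 α b) (x : ℝ) :
    Hil (fun y => a y * deriv b y) x - a x * Hil (deriv b) x =
      (1 / (2 * π)) * pvLim (fun δ =>
        ∫ y in {y : ℝ | y ∈ Set.Icc (x - π) (x + π) ∧ δ ≤ |x - y|},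
          (deriv a y / Real.tan ((x - y) / 2) +
            (a y - a x) / (2 * Real.sin ((x - y) / 2) ^ 2)) * (b x - b y)) := by
  obtain ⟨ha, -⟩ := haC
  obtain ⟨hb, Kb, hKb⟩ := hbC
  replace ha : ContDiff ℝ 1 a := ha.of_le (by norm_num)
  replace hb : ContDiff ℝ 1 b := by exact_mod_cast hb
  obtain ⟨Ka, hKa⟩ :=
    ha.contDiffOn.exists_lipschitzOnWith one_ne_zero (convex_Icc (x - π) (x + π)) isCompact_Icc
  have hb' := (hb.continuous_deriv le_rfl).continuousOn (s := Icc (x - π) (x + π))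
  have hHb := integrableOn_sub_mul_cot_of_holder hα0 hb' fun y _ => by
    simpa only [Function.iterate_one, abs_sub_comm x y] using hKb y x
  have hH₁ := tendsto_setIntegral_pvDomain_div_tan (integrableOn_mul_sub_mul_cot hKa hb' hHb)
  have hH₂ := tendsto_setIntegral_pvDomain_div_tan hHb
  have hB := tendsto_ibpBoundary_sub_ibpBoundary hKa hb.continuous.continuousAt
  have hR := ((hH₁.sub (hH₂.const_mul (a x))).sub hB).congr'
      (f₂ := fun δ => ∫ y in pvDomain x δ, ibpIntegrand a b x y) <| by
    filter_upwards [Ioc_mem_nhdsGT pi_pos] with δ hδ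
    rw [setIntegral_pvDomain_commutator ha hb hδ.1 hδ.2]
    ring
  simp only [Hil, pvLim]
  rw [hH₁.limUnder_eq, hH₂.limUnder_eq, hR.limUnder_eq]
  ring

/-- Integration-by-parts representation of the commutator. -/
theorem commutator_ibp_representation (α : ℝ) (hα0 : 0 < α) (hα1 : α < 1)
    (a b : ℝ → ℝ) (hpa : Function.Periodic a (2 * π)) (hpb : Function.Periodic b (2 * π))
    (haC : MemCka 2 α a) (hbC : MemCka 1 α b) (x : ℝ) :
    Hil (fun y => a y * deriv b y) x - a x * Hil (deriv b) x =
      (1 / (2 * π)) * pvLim (fun δ =>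
        ∫ y in {y : ℝ | y ∈ Set.Icc (x - π) (x + π) ∧ δ ≤ |x - y|},
          (deriv a y / Real.tan ((x - y) / 2) +
            (a y - a x) / (2 * Real.sin ((x - y) / 2) ^ 2)) * (b x - b y)) :=
  commutator_ibp_representation_general α hα0 a b haC hbC x
end

section
/- Let f : ℝ → ℝ be a 2π-periodic continuously differentiable function with Hölder continuous derivative. Then for every x ∈ ℝ, the Hilbert transform of its derivative equals the Zygmund operator applied to f: (1/2π) p.v. ∫_{−π}^{π} f'(y)/tan((x−y)/2) dy = (1/4π) p.v. ∫_{−π}^{π} (f(x) − f(x−y))/sin²(y/2) dy, i.e. H[f'] = Λ[f]. -/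
open Real Filter MeasureTheory Set

open Topology

/-! Substituting `y = x ∓ t` folds both truncated integrals onto `[δ, π]`. With
`w t = f' (x - t) - f' (x + t)` the Hilbert one becomes `∫_δ^π w t * cot (t / 2)`. With
`u t = 2 f x - f (x - t) - f (x + t)`, so that `u' = w`, the Zygmund one is
`∫_δ^π u t / sin² (t / 2)`, and integrating by parts against `-2 cot (t / 2)` turns it into
`2 cot (δ / 2) u δ + 2 ∫_δ^π w t * cot (t / 2)`. Hölder continuity of `f'` gives
`|w t| ≤ C t ^ α`, so `w t * cot (t / 2) = O(t ^ (α - 1))` is integrable on `(0, π]` and both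
integrals converge, while the boundary term vanishes in the limit because `u 0 = u' 0 = 0`. -/

lemma sin_half_ne_zero {s : ℝ} (hs : s ≠ 0) (h : |s| < 2 * π) : sin (s / 2) ≠ 0 := by
  rw [abs_lt] at h
  rw [Ne, sin_eq_zero_iff_of_lt_of_lt (by linarith) (by linarith)]
  exact div_ne_zero hs two_ne_zero

lemma continuousOn_cot_half {s : Set ℝ} (hs : ∀ t ∈ s, sin (t / 2) ≠ 0) :
    ContinuousOn (fun t => cot (t / 2)) s := by
  simp only [cot_eq_cos_div_sin]
  exact (continuous_cos.comp (continuous_id.div_const 2)).continuousOn.div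
    (continuous_sin.comp (continuous_id.div_const 2)).continuousOn hs

lemma abs_cot_half_le {t : ℝ} (h0 : 0 < t) (hπ : t ≤ π) : |cot (t / 2)| ≤ π / t := by
  have hsin : t / π ≤ sin (t / 2) := by
    have := mul_le_sin (x := t / 2) (by linarith) (by linarith)
    calc t / π = 2 / π * (t / 2) := by field_simp
      _ ≤ sin (t / 2) := this
  have hpos : 0 < t / π := div_pos h0 pi_pos
  rw [cot_eq_cos_div_sin, abs_div, abs_of_pos (hpos.trans_le hsin)]
  calc |cos (t / 2)| / sin (t / 2) ≤ 1 / sin (t / 2) :=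
        div_le_div_of_nonneg_right (abs_cos_le_one _) (hpos.trans_le hsin).le
    _ ≤ 1 / (t / π) := one_div_le_one_div_of_le hpos hsin
    _ = π / t := one_div_div t π

lemma cot_neg (x : ℝ) : cot (-x) = -cot x := by
  simp only [cot_eq_cos_div_sin, cos_neg, sin_neg, div_neg]

lemma div_tan_eq_mul_cot (a x : ℝ) : a / tan x = a * cot x := by
  rw [← cot_inv_eq_tan, div_inv_eq_mul]

lemma hasDerivAt_neg_two_mul_cot_half {t : ℝ} (ht : sin (t / 2) ≠ 0) :
    HasDerivAt (fun s => -2 * cot (s / 2)) (1 / sin (t / 2) ^ 2) t := by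
  have hhalf : HasDerivAt (fun s : ℝ => s / 2) (1 / 2) t := by
    simpa using (hasDerivAt_id t).div_const 2
  simp only [cot_eq_cos_div_sin]
  refine ((hhalf.cos.div hhalf.sin ht).const_mul (-2)).congr_deriv ?_
  field_simp
  linear_combination sin_sq_add_cos_sq (t / 2)

lemma annulus_eq_union {δ R : ℝ} (hδ : 0 ≤ δ) :
    {s : ℝ | δ ≤ |s| ∧ |s| ≤ R} = Icc (-R) (-δ) ∪ Icc δ R := by
  ext s
  simp only [mem_ofPred_eq, mem_union, mem_Icc, le_abs, abs_le]
  constructor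
  · rintro ⟨h | h, h₁, h₂⟩
    · exact Or.inr ⟨h, h₂⟩
    · exact Or.inl ⟨h₁, by linarith⟩
  · rintro (⟨h₁, h₂⟩ | ⟨h₁, h₂⟩)
    · exact ⟨Or.inr (by linarith), h₁, by linarith⟩
    · exact ⟨Or.inl h₁, by linarith, h₂⟩

lemma isCompact_annulus {δ R : ℝ} (hδ : 0 ≤ δ) : IsCompact {s : ℝ | δ ≤ |s| ∧ |s| ≤ R} := by
  rw [annulus_eq_union hδ]
  exact isCompact_Icc.union isCompact_Icc

lemma sin_half_ne_zero_of_mem_annulus {δ s : ℝ} (hδ : 0 < δ)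
    (hs : s ∈ {s : ℝ | δ ≤ |s| ∧ |s| ≤ π}) : sin (s / 2) ≠ 0 :=
  sin_half_ne_zero (abs_pos.mp (hδ.trans_le hs.1)) (by linarith [hs.2, pi_pos])

lemma setIntegral_annulus_eq {g : ℝ → ℝ} {δ R : ℝ} (hδ : 0 < δ) (hδR : δ ≤ R)
    (hg : IntegrableOn g {s | δ ≤ |s| ∧ |s| ≤ R}) :
    ∫ s in {s | δ ≤ |s| ∧ |s| ≤ R}, g s = ∫ t in δ..R, (g t + g (-t)) := by
  rw [annulus_eq_union hδ.le] at hg ⊢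
  have hdisj : Disjoint (Icc (-R) (-δ)) (Icc δ R) :=
    disjoint_left.mpr fun s h₁ h₂ => by linarith [h₁.2, h₂.1]
  have hneg : IntervalIntegrable (fun t => g (-t)) volume δ R := by
    rw [intervalIntegrable_iff_integrableOn_Icc_of_le hδR]
    simpa using (hg.mono_set subset_union_left).comp_neg
  rw [setIntegral_union hdisj measurableSet_Icc (hg.mono_set subset_union_left)
      (hg.mono_set subset_union_right), integral_Icc_eq_integral_Ioc,
    integral_Icc_eq_integral_Ioc, ← intervalIntegral.integral_of_le (by linarith),
    ← intervalIntegral.integral_of_le hδR, intervalIntegral.integral_add _ hneg,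
    intervalIntegral.integral_comp_neg (fun t => g t), add_comm]
  exact (intervalIntegrable_iff_integrableOn_Icc_of_le hδR).mpr
    (hg.mono_set subset_union_right)

lemma setIntegral_centered_annulus_eq (g : ℝ → ℝ) (x δ R : ℝ) :
    ∫ y in {y | y ∈ Icc (x - R) (x + R) ∧ δ ≤ |x - y|}, g y =
      ∫ s in {s | δ ≤ |s| ∧ |s| ≤ R}, g (x - s) := by
  have hpre : (fun s => x - s) ⁻¹' {y | y ∈ Icc (x - R) (x + R) ∧ δ ≤ |x - y|} =
      {s | δ ≤ |s| ∧ |s| ≤ R} := by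
    ext s
    simp only [mem_preimage, mem_ofPred_eq, mem_Icc, sub_sub_cancel, abs_le]
    constructor
    · rintro ⟨⟨h₁, h₂⟩, h⟩
      exact ⟨h, by linarith, by linarith⟩
    · rintro ⟨h, h₁, h₂⟩
      exact ⟨⟨by linarith, by linarith⟩, h⟩
  rw [← hpre, (Measure.measurePreserving_sub_left volume x).setIntegral_preimage_emb
    (measurableEmbedding_subLeft x)]

lemma intervalIntegral_div_sin_half_sq_eq {u u' : ℝ → ℝ} {δ : ℝ} (hδ : 0 < δ) (hδπ : δ ≤ π)
    (hu : ∀ t ∈ uIcc δ π, HasDerivAt u (u' t) t) (hu' : IntervalIntegrable u' volume δ π) :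
    ∫ t in δ..π, u t / sin (t / 2) ^ 2 =
      2 * cot (δ / 2) * u δ + 2 * ∫ t in δ..π, u' t * cot (t / 2) := by
  have hsin : ∀ t ∈ uIcc δ π, sin (t / 2) ≠ 0 := fun t ht => by
    rw [uIcc_of_le hδπ] at ht
    exact sin_half_ne_zero (by linarith [ht.1])
      (by rw [abs_of_pos (by linarith [ht.1])]; linarith [ht.2, pi_pos])
  have hv' : IntervalIntegrable (fun t => 1 / sin (t / 2) ^ 2) volume δ π :=
    (continuousOn_const.div ((continuous_sin.comp (continuous_id.div_const 2)).pow 2).continuousOn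
      fun t ht => pow_ne_zero 2 (hsin t ht)).intervalIntegrable
  have ibp := intervalIntegral.integral_mul_deriv_eq_deriv_mul hu
    (fun t ht => hasDerivAt_neg_two_mul_cot_half (hsin t ht)) hu' hv'
  simp only [mul_one_div, mul_left_comm _ (-2 : ℝ), intervalIntegral.integral_const_mul] at ibp
  rw [ibp, cot_eq_cos_div_sin (π / 2), cos_pi_div_two]
  ring

lemma hasDerivAt_centered_second_difference {f : ℝ → ℝ} (hf : Differentiable ℝ f) (x t : ℝ) :
    HasDerivAt (fun s => 2 * f x - f (x - s) - f (x + s))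
      (deriv f (x - t) - deriv f (x + t)) t :=
  (((hf _).hasDerivAt.comp_const_sub x t).const_sub (2 * f x)).sub
    ((hf _).hasDerivAt.comp_const_add x t) |>.congr_deriv (by ring)

lemma hilbert_truncation_eq {g : ℝ → ℝ} (hg : Continuous g) (x : ℝ) {δ : ℝ} (hδ : 0 < δ)
    (hδπ : δ ≤ π) :
    ∫ y in {y | y ∈ Icc (x - π) (x + π) ∧ δ ≤ |x - y|}, g y / tan ((x - y) / 2) =
      ∫ t in δ..π, (g (x - t) - g (x + t)) * cot (t / 2) := by
  have hint : IntegrableOn (fun s => g (x - s) * cot (s / 2)) {s | δ ≤ |s| ∧ |s| ≤ π} :=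
    ((hg.comp (continuous_sub_left x)).continuousOn.mul (continuousOn_cot_half
      fun s hs => sin_half_ne_zero_of_mem_annulus hδ hs)).integrableOn_compact
      (isCompact_annulus hδ.le)
  rw [setIntegral_centered_annulus_eq]
  simp only [sub_sub_cancel, div_tan_eq_mul_cot]
  rw [setIntegral_annulus_eq hδ hδπ hint]
  congr 1 with t
  rw [neg_div, cot_neg, sub_neg_eq_add]
  ring

lemma zygmund_truncation_eq {f : ℝ → ℝ} (hf : Differentiable ℝ f) (hf' : Continuous (deriv f))
    (x : ℝ) {δ : ℝ} (hδ : 0 < δ) (hδπ : δ ≤ π) :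
    ∫ y in {y | δ ≤ |y| ∧ |y| ≤ π}, (f x - f (x - y)) / sin (y / 2) ^ 2 =
      2 * cot (δ / 2) * (2 * f x - f (x - δ) - f (x + δ)) +
        2 * ∫ t in δ..π, (deriv f (x - t) - deriv f (x + t)) * cot (t / 2) := by
  have hint : IntegrableOn (fun y => (f x - f (x - y)) / sin (y / 2) ^ 2)
      {s | δ ≤ |s| ∧ |s| ≤ π} :=
    ((continuous_const.sub (hf.continuous.comp (continuous_sub_left x))).continuousOn.div
      ((continuous_sin.comp (continuous_id.div_const 2)).pow 2).continuousOn
      fun s hs => pow_ne_zero 2 (sin_half_ne_zero_of_mem_annulus hδ hs)).integrableOn_compact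
      (isCompact_annulus hδ.le)
  rw [setIntegral_annulus_eq hδ hδπ hint, ← intervalIntegral_div_sin_half_sq_eq hδ hδπ
    (fun t _ => hasDerivAt_centered_second_difference hf x t)
    (((hf'.comp (continuous_sub_left x)).sub (hf'.comp (continuous_const_add x))).intervalIntegrable
      δ π)]
  congr 1 with t
  rw [neg_div, sin_neg, neg_sq, sub_neg_eq_add, ← add_div]
  ring_nf

lemma integrableOn_mul_cot_half {w : ℝ → ℝ} {C α : ℝ} (hα : 0 < α)
    (hw : ContinuousOn w (Ioc 0 π)) (hbound : ∀ t ∈ Ioc 0 π, |w t| ≤ C * t ^ α) :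
    IntegrableOn (fun t => w t * cot (t / 2)) (Ioc 0 π) := by
  have hdom : IntegrableOn (fun t : ℝ => C * π * t ^ (α - 1)) (Ioc 0 π) :=
    (intervalIntegrable_iff_integrableOn_Ioc_of_le pi_pos.le).mp
      ((intervalIntegral.intervalIntegrable_rpow' (by linarith)).const_mul _)
  refine hdom.mono' ((hw.mul (continuousOn_cot_half fun t ht => sin_half_ne_zero ht.1.ne'
    (by rw [abs_of_pos ht.1]; linarith [ht.2, pi_pos]))).aestronglyMeasurable measurableSet_Ioc) ?_
  filter_upwards [ae_restrict_mem measurableSet_Ioc] with t ⟨ht0, htπ⟩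
  rw [norm_mul, Real.norm_eq_abs, Real.norm_eq_abs]
  calc |w t| * |cot (t / 2)| ≤ C * t ^ α * (π / t) :=
        mul_le_mul (hbound t ⟨ht0, htπ⟩) (abs_cot_half_le ht0 htπ) (abs_nonneg _)
          ((abs_nonneg _).trans (hbound t ⟨ht0, htπ⟩))
    _ = C * π * t ^ (α - 1) := by
        rw [rpow_sub_one ht0.ne']
        field_simp

lemma tendsto_intervalIntegral_nhdsGT {G : ℝ → ℝ} {a b : ℝ} (hab : a < b)
    (hG : IntegrableOn G (Ioc a b)) :
    Tendsto (fun δ => ∫ t in δ..b, G t) (𝓝[>] a) (𝓝 (∫ t in a..b, G t)) := by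
  have hG' : IntegrableOn G (uIcc a b) := by
    rwa [uIcc_of_le hab.le, integrableOn_Icc_iff_integrableOn_Ioc]
  have hcont := intervalIntegral.continuousOn_primitive_interval_left hG'
  rw [uIcc_of_le hab.le] at hcont
  exact ((hcont a (left_mem_Icc.mpr hab.le)).mono_of_mem_nhdsWithin
    (mem_of_superset (Ioo_mem_nhdsGT hab) Ioo_subset_Icc_self)).tendsto

lemma tendsto_cot_half_mul_nhdsGT {u : ℝ → ℝ} (hu0 : u 0 = 0) (hu : HasDerivAt u 0 0) :
    Tendsto (fun δ => cot (δ / 2) * u δ) (𝓝[>] 0) (𝓝 0) := by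
  have hslope : Tendsto (fun t => π * |t⁻¹ * u t|) (𝓝[>] 0) (𝓝 0) := by
    simpa [hu0] using (hu.tendsto_slope_zero_right.abs).const_mul π
  refine squeeze_zero_norm' ?_ hslope
  filter_upwards [Ioo_mem_nhdsGT pi_pos] with t ⟨ht0, htπ⟩
  rw [Real.norm_eq_abs, abs_mul, abs_mul, abs_inv, abs_of_pos ht0, ← mul_assoc]
  exact mul_le_mul_of_nonneg_right (abs_cot_half_le ht0 htπ.le) (abs_nonneg _)

lemma pvLim_eq_of_tendsto {g : ℝ → ℝ} {a : ℝ} (h : Tendsto g (𝓝[>] 0) (𝓝 a)) : pvLim g = a :=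
  h.limUnder_eq

theorem hilbert_deriv_eq_zygmund_general (f : ℝ → ℝ)
    (hf : ContDiff ℝ 1 f)
    (hHolder : ∃ K αe : ℝ, 0 < αe ∧ αe ≤ 1 ∧
      ∀ x y : ℝ, |deriv f x - deriv f y| ≤ K * |x - y| ^ αe) :
    ∀ x : ℝ, Hil (deriv f) x =
      (1 / (4 * π)) * pvLim (fun δ =>
        ∫ y in {y : ℝ | δ ≤ |y| ∧ |y| ≤ π},
          (f x - f (x - y)) / Real.sin (y / 2) ^ 2) := by
  intro x
  obtain ⟨K, α, hα, -, hK⟩ := hHolder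
  have hdf : Differentiable ℝ f := hf.differentiable one_ne_zero
  have hdf' : Continuous (deriv f) := hf.continuous_deriv le_rfl
  have hint : IntegrableOn (fun t => (deriv f (x - t) - deriv f (x + t)) * cot (t / 2))
      (Ioc 0 π) := by
    refine integrableOn_mul_cot_half (C := K * 2 ^ α) hα (by fun_prop) fun t ht => ?_
    have h := hK (x - t) (x + t)
    rwa [show x - t - (x + t) = -(2 * t) by ring, abs_neg,
      abs_of_pos (by linarith [ht.1] : 0 < 2 * t), mul_rpow zero_le_two ht.1.le, ← mul_assoc] at h
  have hbdry := tendsto_cot_half_mul_nhdsGT (u := fun t => 2 * f x - f (x - t) - f (x + t))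
    (by simp only [sub_zero, add_zero]; ring)
    (by simpa using hasDerivAt_centered_second_difference hdf x 0)
  have hI := tendsto_intervalIntegral_nhdsGT pi_pos hint
  have hIoo : Ioo 0 π ∈ 𝓝[>] (0 : ℝ) := Ioo_mem_nhdsGT pi_pos
  rw [Hil, pvLim_eq_of_tendsto (hI.congr' (eventually_of_mem hIoo fun δ hδ =>
      (hilbert_truncation_eq hdf' x hδ.1 hδ.2.le).symm)),
    pvLim_eq_of_tendsto ((hbdry.const_mul 2).add (hI.const_mul 2) |>.congr'
      (eventually_of_mem hIoo fun δ hδ => ?_))]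
  · simp only [mul_zero, zero_add]
    field_simp
    ring
  · rw [zygmund_truncation_eq hdf hdf' x hδ.1 hδ.2.le, mul_assoc]

/-- `H[f'] = Λ[f]` (Hilbert transform of the derivative equals the
Zygmund operator). -/
theorem hilbert_deriv_eq_zygmund (f : ℝ → ℝ) (hper : Function.Periodic f (2 * π))
    (hf : ContDiff ℝ 1 f)
    (hHolder : ∃ K αe : ℝ, 0 < αe ∧ αe ≤ 1 ∧
      ∀ x y : ℝ, |deriv f x - deriv f y| ≤ K * |x - y| ^ αe) :
    ∀ x : ℝ, Hil (deriv f) x =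
      (1 / (4 * π)) * pvLim (fun δ =>
        ∫ y in {y : ℝ | δ ≤ |y| ∧ |y| ≤ π},
          (f x - f (x - y)) / Real.sin (y / 2) ^ 2) :=
  hilbert_deriv_eq_zygmund_general f hf hHolder
end
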